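/- For every α ∈ [1/2, (2+√2)/4] there exists a sequential qubit strategy with W_AB = α and W_AC = (4 + √2 + √(16α − 16α² − 2))/8; hence the bound of Result 1 is tight. -/
import Mathlib


open Matrix ComplexOrder

noncomputable section

/-- The bit `x_y` of `x = (x₀, x₁)`. -/
def bit (x : Bool × Bool) (y : Bool) : Bool := if y then x.2 else x.1

/-- Alice–Bob witness `W_AB = (1/8) ∑_{x,y} tr[ρ_x K_{x_y|y}† K_{x_y|y}]`. -/
def WAB (ρ : Bool × Bool → Matrix (Fin 2) (Fin 2) ℂ)
    (K : Bool → Bool → Matrix (Fin 2) (Fin 2) ℂ) : ℝ :=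
  (1 / 8) * ∑ x : Bool × Bool, ∑ y : Bool,
    ((ρ x * ((K y (bit x y))ᴴ * K y (bit x y))).trace).re

/-- Alice–Charlie witness
`W_AC = (1/16) ∑_{x,y,b,z} tr[K_{b|y} ρ_x K_{b|y}† C_{x_z|z}]`. -/
def WAC (ρ : Bool × Bool → Matrix (Fin 2) (Fin 2) ℂ)
    (K C : Bool → Bool → Matrix (Fin 2) (Fin 2) ℂ) : ℝ :=
  (1 / 16) * ∑ x : Bool × Bool, ∑ y : Bool, ∑ b : Bool, ∑ z : Bool,
    ((K y b * ρ x * (K y b)ᴴ * C z (bit x z)).trace).re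

/-- A sequential qubit strategy: four qubit states, two instruments (Kraus
operators), and two binary POVMs. -/
def ValidStrategy (ρ : Bool × Bool → Matrix (Fin 2) (Fin 2) ℂ)
    (K C : Bool → Bool → Matrix (Fin 2) (Fin 2) ℂ) : Prop :=
  (∀ x, (ρ x).PosSemidef ∧ (ρ x).trace = 1) ∧
  (∀ y, (K y false)ᴴ * K y false + (K y true)ᴴ * K y true = 1) ∧
  (∀ z b, (C z b).PosSemidef) ∧
  (∀ z, C z false + C z true = 1)

def sg (b : Bool) : ℝ := if b then -1 else 1

def rhoS (r : ℝ) (x : Bool × Bool) : Matrix (Fin 2) (Fin 2) ℂ :=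
  !![(((2 + sg x.2 * r) / 4 : ℝ) : ℂ), ((sg x.1 * r / 4 : ℝ) : ℂ);
     ((sg x.1 * r / 4 : ℝ) : ℂ), (((2 - sg x.2 * r) / 4 : ℝ) : ℂ)]

def KS (a c : ℝ) (y b : Bool) : Matrix (Fin 2) (Fin 2) ℂ :=
  if y then !![(((a + c + sg b * (a - c)) / 2 : ℝ) : ℂ), 0;
               0, (((a + c - sg b * (a - c)) / 2 : ℝ) : ℂ)]
  else !![(((a + c) / 2 : ℝ) : ℂ), ((sg b * (a - c) / 2 : ℝ) : ℂ);
          ((sg b * (a - c) / 2 : ℝ) : ℂ), (((a + c) / 2 : ℝ) : ℂ)]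

def CS (z b : Bool) : Matrix (Fin 2) (Fin 2) ℂ :=
  if z then !![(((1 + sg b) / 2 : ℝ) : ℂ), 0; 0, (((1 - sg b) / 2 : ℝ) : ℂ)]
  else !![((1 / 2 : ℝ) : ℂ), ((sg b / 2 : ℝ) : ℂ); ((sg b / 2 : ℝ) : ℂ), ((1 / 2 : ℝ) : ℂ)]

lemma psd_of_eq (M : Matrix (Fin 2) (Fin 2) ℂ) (A : Matrix (Fin 1) (Fin 2) ℂ)
    (h : M = Aᴴ * A) : M.PosSemidef :=
  h ▸ Matrix.posSemidef_conjTranspose_mul_self A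

lemma psd2 (p q s w0 w1 : ℝ) (h0 : w0 * w0 = p) (h1 : w1 * w1 = s) (h01 : w0 * w1 = q) :
    (!![(p : ℂ), (q : ℂ); (q : ℂ), (s : ℂ)]).PosSemidef := by
  apply psd_of_eq _ !![(w0:ℂ), (w1:ℂ)]
  ext i j
  fin_cases i <;> fin_cases j <;>
    simp [Matrix.mul_apply, Matrix.conjTranspose_apply, Complex.star_def, Complex.conj_ofReal] <;>
    norm_cast <;>
    first
      | linear_combination -h0
      | linear_combination -h01
      | linear_combination -h1

lemma rhoS_psd (r : ℝ) (hr0 : 0 ≤ r) (hr : r * r = 2) (hr2 : r ≤ 2) (x : Bool × Bool) :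
    (rhoS r x).PosSemidef := by
  obtain ⟨x1, x2⟩ := x
  have hsq : sg x1 * sg x1 = 1 := by cases x1 <;> norm_num [sg]
  have hsq2 : sg x2 * sg x2 = 1 := by cases x2 <;> norm_num [sg]
  have h2p : (0:ℝ) ≤ (2 + sg x2 * r) / 4 := by cases x2 <;> simp [sg] <;> nlinarith
  have h2m : (0:ℝ) ≤ (2 - sg x2 * r) / 4 := by cases x2 <;> simp [sg] <;> nlinarith
  show (rhoS r (x1, x2)).PosSemidef
  unfold rhoS
  refine psd2 _ _ _ (Real.sqrt ((2 + sg x2 * r) / 4))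
    (sg x1 * Real.sqrt ((2 - sg x2 * r) / 4)) ?_ ?_ ?_
  · exact Real.mul_self_sqrt h2p
  · rw [show (sg x1 * Real.sqrt ((2 - sg x2 * r) / 4)) *
        (sg x1 * Real.sqrt ((2 - sg x2 * r) / 4))
        = (sg x1 * sg x1) * (Real.sqrt ((2 - sg x2 * r) / 4) *
          Real.sqrt ((2 - sg x2 * r) / 4)) by ring,
      hsq, Real.mul_self_sqrt h2m]
    simp
  · rw [show Real.sqrt ((2 + sg x2 * r) / 4) * (sg x1 * Real.sqrt ((2 - sg x2 * r) / 4))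
        = sg x1 * (Real.sqrt ((2 + sg x2 * r) / 4) * Real.sqrt ((2 - sg x2 * r) / 4)) by ring,
      ← Real.sqrt_mul h2p]
    have h8 : ((2 + sg x2 * r) / 4 * ((2 - sg x2 * r) / 4) : ℝ) = (r / 4) ^ 2 := by
      linear_combination (-(r * r) / 16) * hsq2 - (1 / 8) * hr
    rw [h8, Real.sqrt_sq (by positivity)]
    ring

lemma rhoS_trace (r : ℝ) (x : Bool × Bool) : (rhoS r x).trace = 1 := by
  unfold rhoS
  rw [Matrix.trace_fin_two_of]
  push_cast
  ring

lemma KS_complete (a c : ℝ) (h2 : a * a + c * c = 1) (y : Bool) :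
    (KS a c y false)ᴴ * KS a c y false + (KS a c y true)ᴴ * KS a c y true = 1 := by
  have h2C : (a : ℂ) * a + (c : ℂ) * c = 1 := by
    exact_mod_cast congrArg (Complex.ofReal) h2
  cases y <;>
  · ext i j
    fin_cases i <;> fin_cases j <;>
      simp [KS, sg, Matrix.mul_apply, Matrix.conjTranspose_apply, Complex.star_def,
        Complex.conj_ofReal, map_ofNat, Matrix.one_apply, Fin.sum_univ_two] <;>
      push_cast <;>
      first
        | ring1
        | linear_combination h2C
        | linear_combination 2 * h2C

lemma CS_psd (r : ℝ) (hr0 : 0 ≤ r) (hr : r * r = 2) (z b : Bool) : (CS z b).PosSemidef := by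
  have hrC : (r : ℂ) * r = 2 := by exact_mod_cast congrArg Complex.ofReal hr
  cases z <;> cases b
  · refine psd_of_eq _ !![((r / 2 : ℝ) : ℂ), ((r / 2 : ℝ) : ℂ)] ?_
    ext i j
    fin_cases i <;> fin_cases j <;>
      simp [CS, sg, Matrix.mul_apply, Matrix.conjTranspose_apply, Complex.star_def,
        Complex.conj_ofReal] <;> push_cast <;>
      first
        | ring1
        | linear_combination (1 / 4 : ℂ) * hrC
        | linear_combination (-(1 / 4) : ℂ) * hrC
  · refine psd_of_eq _ !![((r / 2 : ℝ) : ℂ), ((-(r / 2) : ℝ) : ℂ)] ?_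
    ext i j
    fin_cases i <;> fin_cases j <;>
      simp [CS, sg, Matrix.mul_apply, Matrix.conjTranspose_apply, Complex.star_def,
        Complex.conj_ofReal] <;> push_cast <;>
      first
        | ring1
        | linear_combination (1 / 4 : ℂ) * hrC
        | linear_combination (-(1 / 4) : ℂ) * hrC
  · refine psd_of_eq _ !![(1 : ℂ), 0] ?_
    ext i j
    fin_cases i <;> fin_cases j <;>
      simp [CS, sg, Matrix.mul_apply, Matrix.conjTranspose_apply]
  · refine psd_of_eq _ !![(0 : ℂ), 1] ?_
    ext i j
    fin_cases i <;> fin_cases j <;>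
      simp [CS, sg, Matrix.mul_apply, Matrix.conjTranspose_apply]

lemma CS_complete (z : Bool) : CS z false + CS z true = 1 := by
  cases z <;>
  · ext i j
    fin_cases i <;> fin_cases j <;>
      simp [CS, sg, Matrix.one_apply] <;> norm_num

lemma ct2 (a b c d : ℂ) : (!![a, b; c, d])ᴴ = !![star a, star c; star b, star d] := by
  ext i j; fin_cases i <;> fin_cases j <;> simp

lemma WAB_eq (r a c α : ℝ) (hr : r * r = 2)
    (ha : a * a = (1 + r * (2 * α - 1)) / 2) (hc : c * c = (1 - r * (2 * α - 1)) / 2) :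
    WAB (rhoS r) (KS a c) = α := by
  simp only [WAB, rhoS, KS, bit, sg, Fintype.sum_prod_type, Fintype.sum_bool, reduceIte, Bool.false_eq_true, eq_self_iff_true, if_true, if_false, ite_true, ite_false,
    ct2, star_zero, Complex.star_def, Complex.conj_ofReal,
    Matrix.mul_fin_two, Matrix.trace_fin_two_of]
  simp only [Complex.add_re, Complex.mul_re, Complex.mul_im, Complex.add_im,
    Complex.ofReal_re, Complex.ofReal_im, Complex.zero_re, Complex.zero_im,
    mul_zero, zero_mul, add_zero, zero_add, sub_zero, neg_zero]
  ring_nf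
  linear_combination (r / 4 + 1 / 2) * ha + (1 / 2 - r / 4) * hc + ((2 * α - 1) / 4) * hr

lemma WAC_eq (r a c v : ℝ) (h2 : a * a + c * c = 1) (hac : a * c = v / 2) :
    WAC (rhoS r) (KS a c) CS = (4 + r + r * v) / 8 := by
  simp only [WAC, rhoS, KS, CS, bit, sg, Fintype.sum_prod_type, Fintype.sum_bool, reduceIte, Bool.false_eq_true, eq_self_iff_true, if_true, if_false, ite_true, ite_false,
    ct2, star_zero, Complex.star_def, Complex.conj_ofReal,
    Matrix.mul_fin_two, Matrix.trace_fin_two_of]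
  simp only [Complex.add_re, Complex.mul_re, Complex.mul_im, Complex.add_im,
    Complex.ofReal_re, Complex.ofReal_im, Complex.zero_re, Complex.zero_im,
    mul_zero, zero_mul, add_zero, zero_add, sub_zero, neg_zero]
  ring_nf
  linear_combination (r / 8 + 1 / 2) * h2 + (r / 4) * hac

/-- Result 1 (tightness): for every `α ∈ [1/2, (2+√2)/4]` there is a
sequential qubit strategy with `W_AB = α` and
`W_AC = (4 + √2 + √(16α − 16α² − 2))/8`. -/
theorem sequential_qrac_tradeoff_tight
    (α : ℝ) (hα : α ∈ Set.Icc (1 / 2 : ℝ) ((2 + Real.sqrt 2) / 4)) :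
    ∃ (ρ : Bool × Bool → Matrix (Fin 2) (Fin 2) ℂ)
      (K C : Bool → Bool → Matrix (Fin 2) (Fin 2) ℂ),
      ValidStrategy ρ K C ∧ WAB ρ K = α ∧
      WAC ρ K C = (4 + Real.sqrt 2 + Real.sqrt (16 * α - 16 * α ^ 2 - 2)) / 8 := by
  obtain ⟨hα1, hα2⟩ := hα
  set r : ℝ := Real.sqrt 2 with hrdef
  have hr0 : (0:ℝ) ≤ r := Real.sqrt_nonneg 2
  have hr : r * r = 2 := Real.mul_self_sqrt (by norm_num)
  have hr2 : r ≤ 2 := by nlinarith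
  set u : ℝ := r * (2 * α - 1) with hudef
  have hu0 : 0 ≤ u := by
    have : 0 ≤ 2 * α - 1 := by linarith
    positivity
  have hu1 : u ≤ 1 := by nlinarith
  set a : ℝ := Real.sqrt ((1 + u) / 2) with hadef
  set c : ℝ := Real.sqrt ((1 - u) / 2) with hcdef
  set v : ℝ := Real.sqrt (1 - u ^ 2) with hvdef
  have ha : a * a = (1 + u) / 2 := Real.mul_self_sqrt (by linarith)
  have hc : c * c = (1 - u) / 2 := Real.mul_self_sqrt (by linarith)
  have hv0 : 0 ≤ v := Real.sqrt_nonneg _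
  have hv : v * v = 1 - u ^ 2 := Real.mul_self_sqrt (by nlinarith)
  have hac : a * c = v / 2 := by
    rw [hadef, hcdef, ← Real.sqrt_mul (by linarith)]
    rw [show ((1 + u) / 2 * ((1 - u) / 2) : ℝ) = (1 - u ^ 2) / 4 by ring]
    rw [show ((1 - u ^ 2) / 4 : ℝ) = (Real.sqrt (1 - u ^ 2) / 2) ^ 2 by
      rw [div_pow, Real.sq_sqrt (by nlinarith)]; norm_num]
    rw [Real.sqrt_sq (by positivity)]
  clear_value r u a c v
  have htv : Real.sqrt (16 * α - 16 * α ^ 2 - 2) = r * v := by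
    have h1 : (16 * α - 16 * α ^ 2 - 2 : ℝ) = (r * v) ^ 2 := by
      rw [hudef] at hv; nlinarith [hv, hr]
    rw [h1, Real.sqrt_sq (by positivity)]
  refine ⟨rhoS r, KS a c, CS,
    ⟨fun x => ⟨rhoS_psd r hr0 hr hr2 x, rhoS_trace r x⟩,
     KS_complete a c (by linarith) ,
     CS_psd r hr0 hr,
     CS_complete⟩,
    WAB_eq r a c α hr (by rw [← hudef]; exact ha) (by rw [← hudef]; exact hc),
    ?_⟩
  rw [WAC_eq r a c v (by linarith) hac, htv, hrdef]

end
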